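/- Fix β > 0 and a constant p ∈ (0,1]. Then log E[e^{-βH(σ)} e^{-βH(τ)}] = (1-p)β²/(4p) + β(|σ|² + |τ|²)/(2N) + (β²|στ|²/(4N²))·(1/p - 1) + O(1/N²)·((|σ|² + |τ|²)/N + 1), where the O(1/N²)-term is uniform over σ, τ ∈ {-1,+1}^N. -/

import Mathlib

open MeasureTheory ProbabilityTheory Filter
open scoped Classical

noncomputable section

/-- The spin value `±1` associated to a Boolean. -/
def spin (b : Bool) : ℝ := if b then 1 else -1

/-- The total magnetization `|σ| = σ₁ + ⋯ + σ_N` of a spin configuration. -/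
def mag {N : ℕ} (σ : Fin N → Bool) : ℝ := ∑ i, spin (σ i)

/-- The overlap `|στ| = ∑ σᵢτᵢ` of two spin configurations. -/
def magPair {N : ℕ} (σ τ : Fin N → Bool) : ℝ := ∑ i, spin (σ i) * spin (τ i)

/-- The Hamiltonian `H(σ) = -(1/(2Np)) ∑_{i,j} ε_{i,j} σᵢ σⱼ` of the Ising model on the
directed Erdős–Rényi graph with edge indicators `ε`. -/
def hamil (N : ℕ) (p : ℝ) (ε : Fin N × Fin N → Bool) (σ : Fin N → Bool) : ℝ :=
  -(1 / (2 * N * p)) * ∑ i : Fin N, ∑ j : Fin N,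
    (if ε (i, j) then (1 : ℝ) else 0) * spin (σ i) * spin (σ j)

/-- The joint law of the i.i.d. Bernoulli(p) edge indicators `(ε_{i,j})_{i,j=1}^N`. -/
def bern (N : ℕ) (p : ℝ) : Measure (Fin N × Fin N → Bool) :=
  Measure.pi fun _ => (PMF.bernoulli (min 1 (Real.toNNReal p)) (min_le_left _ _)).toMeasure

/-- The generalized partition function `Z_N(β, g) = ∑_σ e^{-βH(σ)} g(|σ|/√N)`. -/
def ZNg (N : ℕ) (p β : ℝ) (g : ℝ → ℝ) (ε : Fin N × Fin N → Bool) : ℝ :=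
  ∑ σ : Fin N → Bool, Real.exp (-β * hamil N p ε σ) * g (mag σ / Real.sqrt N)

/-- The expectation `𝔼 Z_N(β, g)` over the randomness of the graph. -/
def EZNg (N : ℕ) (p β : ℝ) (g : ℝ → ℝ) : ℝ :=
  ∫ ε, ZNg N p β g ε ∂(bern N p)

/-- The Gaussian expectation `𝔼_ξ [g(ξ) e^{β ξ²/2}]` for a standard normal `ξ`. -/
def gaussExp (β : ℝ) (g : ℝ → ℝ) : ℝ :=
  ∫ x, g x * Real.exp (β * x ^ 2 / 2) ∂(gaussianReal 0 1)

open Real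

/-!
The edge variables are independent, so the expectation factorises over the pairs `(i, j)` and its
logarithm is `∑_{i,j} Λ(aᵢⱼ x)` with `x = β/(Np)`, `aᵢⱼ = (σᵢσⱼ + τᵢτⱼ)/2` and
`Λ(y) = log(1 - p + p eʸ)` the cumulant generating function of Bernoulli(p).
Since `aᵢⱼ ∈ {-1, 0, 1}`, `Λ(aᵢⱼ x) = aᵢⱼ Λₒ(x) + aᵢⱼ² Λₑ(x)` with `Λₒ`, `Λₑ` the odd and even
parts of `Λ`, while `∑ aᵢⱼ = (|σ|² + |τ|²)/2` and `∑ aᵢⱼ² = (N² + |στ|²)/2`.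
Finally `Λₒ(x) = px + O(x³)` and `Λₑ(x) = p(1-p)x²/2 + O(x⁴)`; the odd part has no `x²` term,
which is why the error in front of `|σ|² + |τ|²` is `O(N⁻³)`.
-/

lemma abs_cosh_sub_one_sub_sq_div_two_le {x : ℝ} (hx : |x| ≤ 1) :
    |cosh x - 1 - x ^ 2 / 2| ≤ x ^ 4 / 16 := by
  have hexp := Real.exp_bound hx (n := 4) (by norm_num)
  have hexp_neg := Real.exp_bound (x := -x) (by rwa [abs_neg]) (n := 4) (by norm_num)
  norm_num [Finset.sum_range_succ, Nat.factorial, abs_le] at hexp hexp_neg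
  have habs : |x| ^ 4 = x ^ 4 := by rw [pow_abs, abs_of_nonneg (by positivity)]
  rw [cosh_eq, abs_le]
  constructor <;> nlinarith

lemma cosh_sub_one_le_sq {x : ℝ} (hx : |x| ≤ 1) : cosh x - 1 ≤ x ^ 2 := by
  have h := (abs_le.1 (abs_cosh_sub_one_sub_sq_div_two_le hx)).2
  have hx2 : x ^ 2 ≤ 1 := by rw [← sq_abs]; nlinarith [abs_nonneg x]
  nlinarith [sq_nonneg x]

lemma abs_sinh_sub_self_le {x : ℝ} (hx : |x| ≤ 1) : |sinh x - x| ≤ |x| ^ 3 / 4 := by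
  have hexp := Real.exp_bound hx (n := 3) (by norm_num)
  have hexp_neg := Real.exp_bound (x := -x) (by rwa [abs_neg]) (n := 3) (by norm_num)
  norm_num [Finset.sum_range_succ, Nat.factorial, abs_le] at hexp hexp_neg
  rw [sinh_eq, abs_le]
  constructor <;> nlinarith [pow_nonneg (abs_nonneg x) 3]

lemma abs_log_one_add_sub_self_le {u : ℝ} (hu : 0 ≤ u) : |log (1 + u) - u| ≤ u ^ 2 := by
  have hpos : 0 < 1 + u := by linarith
  have hupper := log_le_sub_one_of_pos hpos
  have hlower := one_sub_inv_le_log_of_pos hpos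
  have hinv : 1 - (1 + u)⁻¹ = u - u ^ 2 / (1 + u) := by field_simp; ring
  have hdiv : u ^ 2 / (1 + u) ≤ u ^ 2 := div_le_self (sq_nonneg u) (by linarith)
  rw [abs_le]; constructor <;> linarith

lemma abs_log_one_add_sub_log_one_sub_sub_le {z : ℝ} (hz : |z| ≤ 1 / 2) :
    |log (1 + z) - log (1 - z) - 2 * z| ≤ 4 * |z| ^ 3 := by
  have hseries := abs_log_sub_add_sum_range_le (x := z) (by linarith) 2
  have hseries_neg := abs_log_sub_add_sum_range_le (x := -z) (by rw [abs_neg]; linarith) 2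
  have hden : |z| ^ 3 / (1 - |z|) ≤ 2 * |z| ^ 3 := by
    rw [div_le_iff₀ (by linarith)]; nlinarith [pow_nonneg (abs_nonneg z) 3]
  rw [abs_neg, sub_neg_eq_add] at hseries_neg
  norm_num [Finset.sum_range_succ] at hseries hseries_neg
  calc |log (1 + z) - log (1 - z) - 2 * z|
      = |(-z + z ^ 2 / 2 + log (1 + z)) - (z + z ^ 2 / 2 + log (1 - z))| := by ring_nf
    _ ≤ |-z + z ^ 2 / 2 + log (1 + z)| + |z + z ^ 2 / 2 + log (1 - z)| := abs_sub _ _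
    _ ≤ 4 * |z| ^ 3 := by linarith

noncomputable def bernoulliCgf (p x : ℝ) : ℝ := log (1 - p + p * exp x)

lemma bernoulliCgf_zero (p : ℝ) : bernoulliCgf p 0 = 0 := by simp [bernoulliCgf]

lemma one_sub_add_mul_exp_eq (p x : ℝ) :
    1 - p + p * exp x = 1 + p * (cosh x - 1) + p * sinh x := by
  rw [← cosh_add_sinh]; ring

lemma one_sub_add_mul_exp_neg_eq (p x : ℝ) :
    1 - p + p * exp (-x) = 1 + p * (cosh x - 1) - p * sinh x := by
  rw [← cosh_sub_sinh]; ring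

section BernoulliCgf

variable {p x : ℝ}

lemma one_sub_add_mul_exp_pos (hp0 : 0 ≤ p) (hp1 : p ≤ 1) (x : ℝ) : 0 < 1 - p + p * exp x := by
  rcases hp0.eq_or_lt with rfl | hp
  · norm_num
  · nlinarith [mul_pos hp (exp_pos x)]

lemma one_add_mul_cosh_sub_one_pos (hp0 : 0 ≤ p) (x : ℝ) : 0 < 1 + p * (cosh x - 1) := by
  nlinarith [one_le_cosh x]

lemma abs_bernoulliCgf_add_neg_sub_le (hp0 : 0 ≤ p) (hp1 : p ≤ 1) (hx : |x| ≤ 1) :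
    |bernoulliCgf p x + bernoulliCgf p (-x) - p * (1 - p) * x ^ 2| ≤ x ^ 4 / 2 := by
  set u := 2 * p * (1 - p) * (cosh x - 1)
  have hvar : 0 ≤ p * (1 - p) ∧ p * (1 - p) ≤ 1 / 4 :=
    ⟨mul_nonneg hp0 (by linarith), by nlinarith [sq_nonneg (p - 1 / 2)]⟩
  have hcosh := one_le_cosh x
  have hu0 : 0 ≤ u := by have := hvar.1; unfold u; nlinarith
  have hprod : (1 - p + p * exp x) * (1 - p + p * exp (-x)) = 1 + u := by
    rw [one_sub_add_mul_exp_eq, one_sub_add_mul_exp_neg_eq]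
    unfold u; nlinarith [cosh_sq x]
  have hu_le : u ≤ x ^ 2 / 2 := by have := cosh_sub_one_le_sq hx; unfold u; nlinarith
  have hu_approx : |u - p * (1 - p) * x ^ 2| ≤ x ^ 4 / 32 := by
    calc |u - p * (1 - p) * x ^ 2| = 2 * (p * (1 - p)) * |cosh x - 1 - x ^ 2 / 2| := by
          rw [← abs_of_nonneg (by linarith [hvar.1] : 0 ≤ 2 * (p * (1 - p))), ← abs_mul]
          unfold u; ring_nf
      _ ≤ 2 * (1 / 4) * (x ^ 4 / 16) := by
          gcongr
          exacts [hvar.2, abs_cosh_sub_one_sub_sq_div_two_le hx]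
      _ = x ^ 4 / 32 := by ring
  have hlog := abs_log_one_add_sub_self_le hu0
  have hu_sq : u ^ 2 ≤ x ^ 4 / 4 := by nlinarith
  rw [bernoulliCgf, bernoulliCgf, ← log_mul (one_sub_add_mul_exp_pos hp0 hp1 x).ne'
    (one_sub_add_mul_exp_pos hp0 hp1 (-x)).ne', hprod]
  calc |log (1 + u) - p * (1 - p) * x ^ 2|
      ≤ |log (1 + u) - u| + |u - p * (1 - p) * x ^ 2| := abs_sub_le _ _ _
    _ ≤ x ^ 4 / 2 := by linarith [pow_nonneg (sq_nonneg x) 2]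

lemma bernoulliCgf_sub_bernoulliCgf_neg (hp0 : 0 ≤ p) (hp1 : p ≤ 1) (x : ℝ) :
    bernoulliCgf p x - bernoulliCgf p (-x)
      = log (1 + p * sinh x / (1 + p * (cosh x - 1)))
        - log (1 - p * sinh x / (1 + p * (cosh x - 1))) := by
  have hm := one_add_mul_cosh_sub_one_pos hp0 x
  have hplus : 1 + p * sinh x / (1 + p * (cosh x - 1))
      = (1 - p + p * exp x) / (1 + p * (cosh x - 1)) := by
    rw [one_sub_add_mul_exp_eq]; field_simp
  have hminus : 1 - p * sinh x / (1 + p * (cosh x - 1))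
      = (1 - p + p * exp (-x)) / (1 + p * (cosh x - 1)) := by
    rw [one_sub_add_mul_exp_neg_eq]; field_simp
  rw [hplus, hminus, log_div (one_sub_add_mul_exp_pos hp0 hp1 x).ne' hm.ne',
    log_div (one_sub_add_mul_exp_pos hp0 hp1 (-x)).ne' hm.ne', bernoulliCgf, bernoulliCgf]
  ring

lemma abs_mul_sinh_div_sub_mul_le (hp0 : 0 ≤ p) (hp1 : p ≤ 1) (hx : |x| ≤ 1) :
    |p * sinh x / (1 + p * (cosh x - 1)) - p * x| ≤ 5 / 4 * |x| ^ 3 := by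
  have hm := one_add_mul_cosh_sub_one_pos hp0 x
  have hcosh0 : 0 ≤ p * (cosh x - 1) := mul_nonneg hp0 (by linarith [one_le_cosh x])
  have hcosh : p * (cosh x - 1) ≤ |x| ^ 2 := by
    rw [sq_abs]; nlinarith [cosh_sub_one_le_sq hx]
  have heq : p * sinh x / (1 + p * (cosh x - 1)) - p * x
      = p * (sinh x - x - x * (p * (cosh x - 1))) / (1 + p * (cosh x - 1)) := by
    field_simp; ring
  calc |p * sinh x / (1 + p * (cosh x - 1)) - p * x|
      ≤ |sinh x - x - x * (p * (cosh x - 1))| := by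
        rw [heq, abs_div, abs_mul, abs_of_nonneg hp0, abs_of_pos hm]
        calc p * |sinh x - x - x * (p * (cosh x - 1))| / (1 + p * (cosh x - 1))
            ≤ 1 * |sinh x - x - x * (p * (cosh x - 1))| / 1 := by gcongr; linarith
          _ = _ := by ring
    _ ≤ |sinh x - x| + |x| * (p * (cosh x - 1)) := by
        refine (abs_sub _ _).trans_eq ?_
        rw [abs_mul, abs_of_nonneg hcosh0]
    _ ≤ |x| ^ 3 / 4 + |x| * |x| ^ 2 := by gcongr; exact abs_sinh_sub_self_le hx
    _ = 5 / 4 * |x| ^ 3 := by ring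

lemma abs_bernoulliCgf_sub_neg_sub_le (hp0 : 0 ≤ p) (hp1 : p ≤ 1) (hx : |x| ≤ 1 / 4) :
    |bernoulliCgf p x - bernoulliCgf p (-x) - 2 * p * x| ≤ 35 * |x| ^ 3 := by
  have hz_lin := abs_mul_sinh_div_sub_mul_le hp0 hp1 (by linarith)
  rw [bernoulliCgf_sub_bernoulliCgf_neg hp0 hp1]
  set z := p * sinh x / (1 + p * (cosh x - 1))
  have hz : |z| ≤ 2 * |x| := by
    have hpx : |p * x| ≤ |x| := by
      rw [abs_mul, abs_of_nonneg hp0]; exact mul_le_of_le_one_left (abs_nonneg x) hp1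
    have hx3 : |x| ^ 3 ≤ |x| / 16 := by
      have : |x| ^ 2 ≤ 1 / 16 := by nlinarith [abs_nonneg x]
      nlinarith [abs_nonneg x]
    have := abs_sub_abs_le_abs_sub z (p * x)
    linarith [abs_nonneg x]
  have hz3 : |z| ^ 3 ≤ 8 * |x| ^ 3 := by
    calc |z| ^ 3 ≤ (2 * |x|) ^ 3 := by gcongr
      _ = 8 * |x| ^ 3 := by ring
  have hlog := abs_log_one_add_sub_log_one_sub_sub_le (z := z) (by linarith)
  calc |log (1 + z) - log (1 - z) - 2 * p * x|
      ≤ |log (1 + z) - log (1 - z) - 2 * z| + 2 * |z - p * x| := by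
        rw [← abs_two, ← abs_mul, abs_two]
        refine (abs_add_le _ _).trans_eq' ?_
        ring_nf
    _ ≤ 35 * |x| ^ 3 := by linarith [pow_nonneg (abs_nonneg x) 3]
end BernoulliCgf

lemma apply_half_add_mul_eq (f : ℝ → ℝ) (hf : f 0 = 0) {s t : ℝ} (hs : s * s = 1)
    (ht : t * t = 1) (x : ℝ) :
    f ((s + t) / 2 * x)
      = (s + t) / 2 * ((f x - f (-x)) / 2) + (1 + s * t) / 2 * ((f x + f (-x)) / 2) := by
  rcases mul_self_eq_one_iff.1 hs with rfl | rfl <;>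
    rcases mul_self_eq_one_iff.1 ht with rfl | rfl <;> norm_num [hf] <;> ring

lemma spin_mul_self (b : Bool) : spin b * spin b = 1 := by cases b <;> norm_num [spin]

lemma abs_spin (b : Bool) : |spin b| = 1 := by cases b <;> norm_num [spin]

section Spins

variable {N : ℕ}

lemma sum_spin_mul_spin (σ : Fin N → Bool) :
    ∑ q : Fin N × Fin N, spin (σ q.1) * spin (σ q.2) = mag σ ^ 2 := by
  rw [Fintype.sum_prod_type, mag, sq, Finset.sum_mul_sum]

lemma sum_spin_mul_spin_mul_spin_mul_spin (σ τ : Fin N → Bool) :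
    ∑ q : Fin N × Fin N, spin (σ q.1) * spin (σ q.2) * (spin (τ q.1) * spin (τ q.2))
      = magPair σ τ ^ 2 := by
  rw [Fintype.sum_prod_type, magPair, sq, Finset.sum_mul_sum]
  refine Finset.sum_congr rfl fun i _ => Finset.sum_congr rfl fun j _ => ?_
  ring

lemma magPair_sq_le (σ τ : Fin N → Bool) : magPair σ τ ^ 2 ≤ (N : ℝ) ^ 2 := by
  have h : |magPair σ τ| ≤ N := by
    calc |magPair σ τ| ≤ ∑ i, |spin (σ i) * spin (τ i)| := Finset.abs_sum_le_sum_abs _ _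
      _ = N := by simp [abs_mul, abs_spin]
  rw [← sq_abs]
  exact pow_le_pow_left₀ (abs_nonneg _) h 2

lemma sum_apply_half_spin_products_mul (f : ℝ → ℝ) (hf : f 0 = 0) (σ τ : Fin N → Bool)
    (x : ℝ) :
    ∑ q : Fin N × Fin N, f ((spin (σ q.1) * spin (σ q.2) + spin (τ q.1) * spin (τ q.2)) / 2 * x)
      = (mag σ ^ 2 + mag τ ^ 2) / 2 * ((f x - f (-x)) / 2)
        + (N ^ 2 + magPair σ τ ^ 2) / 2 * ((f x + f (-x)) / 2) := by
  have hsq : ∀ a b : Bool, spin a * spin b * (spin a * spin b) = 1 := fun a b => by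
    rw [mul_mul_mul_comm, spin_mul_self, spin_mul_self, one_mul]
  rw [Finset.sum_congr rfl fun q _ =>
      apply_half_add_mul_eq f hf (hsq (σ q.1) (σ q.2)) (hsq (τ q.1) (τ q.2)) x,
    Finset.sum_add_distrib, ← Finset.sum_mul, ← Finset.sum_mul, ← Finset.sum_div,
    ← Finset.sum_div, Finset.sum_add_distrib, Finset.sum_add_distrib, sum_spin_mul_spin,
    sum_spin_mul_spin, sum_spin_mul_spin_mul_spin_mul_spin]
  simp [sq]

end Spins

set_option linter.deprecated false in
lemma integral_bernoulli {p : ℝ} (hp0 : 0 ≤ p) (hp1 : p ≤ 1) (f : Bool → ℝ) :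
    ∫ b, f b ∂(PMF.bernoulli (min 1 (Real.toNNReal p)) (min_le_left _ _)).toMeasure
      = (1 - p) * f false + p * f true := by
  simp [PMF.integral_eq_sum, PMF.bernoulli_apply, hp0, hp1]
  ring

section Hamiltonian

variable {N : ℕ} {p : ℝ}

lemma neg_mul_hamil (β : ℝ) (ε : Fin N × Fin N → Bool) (σ : Fin N → Bool) :
    -β * hamil N p ε σ = ∑ q, (if ε q then (1 : ℝ) else 0) *
      (β / (2 * N * p) * (spin (σ q.1) * spin (σ q.2))) := by
  rw [hamil, Fintype.sum_prod_type, Finset.mul_sum]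
  simp only [Finset.mul_sum]
  refine Finset.sum_congr rfl fun i _ => Finset.sum_congr rfl fun j _ => ?_
  ring

lemma integral_exp_hamil_mul_exp_hamil (hp0 : 0 ≤ p) (hp1 : p ≤ 1) (β : ℝ)
    (σ τ : Fin N → Bool) :
    ∫ ε, exp (-β * hamil N p ε σ) * exp (-β * hamil N p ε τ) ∂(bern N p)
      = ∏ q : Fin N × Fin N, (1 - p + p * exp (β / (2 * N * p) *
          (spin (σ q.1) * spin (σ q.2) + spin (τ q.1) * spin (τ q.2)))) := by
  set factor : Fin N × Fin N → Bool → ℝ := fun q b => exp ((if b then (1 : ℝ) else 0) *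
    (β / (2 * N * p) * (spin (σ q.1) * spin (σ q.2) + spin (τ q.1) * spin (τ q.2))))
  have hfactor : ∀ ε : Fin N × Fin N → Bool,
      exp (-β * hamil N p ε σ) * exp (-β * hamil N p ε τ) = ∏ q, factor q (ε q) := fun ε => by
    rw [← exp_add, ← exp_sum, neg_mul_hamil, neg_mul_hamil, ← Finset.sum_add_distrib]
    simp only [mul_add]
  simp_rw [hfactor, bern]
  refine (integral_fintype_prod_eq_prod factor).trans (Finset.prod_congr rfl fun q _ => ?_)
  rw [integral_bernoulli hp0 hp1]
  simp [factor]

lemma log_integral_exp_hamil_mul_exp_hamil (hp0 : 0 ≤ p) (hp1 : p ≤ 1) (β : ℝ)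
    (σ τ : Fin N → Bool) :
    log (∫ ε, exp (-β * hamil N p ε σ) * exp (-β * hamil N p ε τ) ∂(bern N p))
      = ∑ q : Fin N × Fin N, bernoulliCgf p
          ((spin (σ q.1) * spin (σ q.2) + spin (τ q.1) * spin (τ q.2)) / 2 * (β / (N * p))) := by
  rw [integral_exp_hamil_mul_exp_hamil hp0 hp1,
    log_prod fun q _ => (one_sub_add_mul_exp_pos hp0 hp1 _).ne']
  refine Finset.sum_congr rfl fun q _ => ?_
  rw [bernoulliCgf]
  ring_nf

end Hamiltonian

lemma abs_sub_le_of_odd_even {f : ℝ → ℝ} {N p β x S M : ℝ} (hN : 0 < N) (hp : 0 < p)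
    (hx : x = β / (N * p)) (hS : 0 ≤ S) (hM : 0 ≤ M) (hMN : M ≤ N ^ 2)
    (hodd : |f x - f (-x) - 2 * p * x| ≤ 35 * |x| ^ 3)
    (heven : |f x + f (-x) - p * (1 - p) * x ^ 2| ≤ x ^ 4 / 2) :
    |S / 2 * ((f x - f (-x)) / 2) + (N ^ 2 + M) / 2 * ((f x + f (-x)) / 2)
        - (1 - p) * β ^ 2 / (4 * p) - β * S / (2 * N) - β ^ 2 * M / (4 * N ^ 2) * (1 / p - 1)|
      ≤ (35 * |β| ^ 3 / (4 * p ^ 3) + β ^ 4 / (4 * p ^ 4)) / N ^ 2 * (S / N + 1) := by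
  set a := f x - f (-x) - 2 * p * x
  set b := f x + f (-x) - p * (1 - p) * x ^ 2
  have hsplit : S / 2 * ((f x - f (-x)) / 2) + (N ^ 2 + M) / 2 * ((f x + f (-x)) / 2)
        - (1 - p) * β ^ 2 / (4 * p) - β * S / (2 * N) - β ^ 2 * M / (4 * N ^ 2) * (1 / p - 1)
      = S / 4 * a + (N ^ 2 + M) / 4 * b := by
    unfold a b; rw [hx]; field_simp; ring
  have hx3 : |x| ^ 3 = |β| ^ 3 / (N ^ 3 * p ^ 3) := by
    rw [hx, abs_div, abs_mul, abs_of_pos hN, abs_of_pos hp]; ring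
  have hx4 : x ^ 4 = β ^ 4 / (N ^ 4 * p ^ 4) := by rw [hx]; ring
  have hC3 : 0 ≤ 35 * |β| ^ 3 / (4 * p ^ 3) := by positivity
  have hC4 : 0 ≤ β ^ 4 / (4 * p ^ 4) := by positivity
  rw [hsplit]
  calc |S / 4 * a + (N ^ 2 + M) / 4 * b| ≤ S / 4 * |a| + (N ^ 2 + M) / 4 * |b| := by
        refine (abs_add_le _ _).trans_eq ?_
        rw [abs_mul, abs_mul, abs_of_nonneg (by positivity : (0 : ℝ) ≤ S / 4),
          abs_of_nonneg (by positivity : (0 : ℝ) ≤ (N ^ 2 + M) / 4)]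
    _ ≤ S / 4 * (35 * |x| ^ 3) + (2 * N ^ 2) / 4 * (x ^ 4 / 2) := by
        gcongr; linarith
    _ = 35 * |β| ^ 3 / (4 * p ^ 3) * (S / N ^ 3) + β ^ 4 / (4 * p ^ 4) / N ^ 2 := by
        rw [hx3, hx4]; field_simp
    _ ≤ (35 * |β| ^ 3 / (4 * p ^ 3) + β ^ 4 / (4 * p ^ 4)) * (S / N ^ 3)
          + (35 * |β| ^ 3 / (4 * p ^ 3) + β ^ 4 / (4 * p ^ 4)) / N ^ 2 := by
        gcongr <;> linarith
    _ = (35 * |β| ^ 3 / (4 * p ^ 3) + β ^ 4 / (4 * p ^ 4)) / N ^ 2 * (S / N + 1) := by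
        field_simp

theorem log_expectation_exp_H_pair_const_p_general (β p : ℝ)
    (hp : p ∈ Set.Ioc (0 : ℝ) 1) :
    ∃ C : ℝ, ∀ᶠ N : ℕ in atTop, ∀ σ τ : Fin N → Bool,
      |Real.log (∫ ω, Real.exp (-β * hamil N p ω σ) *
            Real.exp (-β * hamil N p ω τ) ∂(bern N p))
          - (1 - p) * β ^ 2 / (4 * p)
          - β * ((mag σ) ^ 2 + (mag τ) ^ 2) / (2 * N)
          - β ^ 2 * (magPair σ τ) ^ 2 / (4 * (N : ℝ) ^ 2) * (1 / p - 1)|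
        ≤ C / (N : ℝ) ^ 2 * (((mag σ) ^ 2 + (mag τ) ^ 2) / N + 1) := by
  obtain ⟨hp0, hp1⟩ := hp
  refine ⟨35 * |β| ^ 3 / (4 * p ^ 3) + β ^ 4 / (4 * p ^ 4), ?_⟩
  have hsmall : ∀ᶠ N : ℕ in atTop, |β / (N * p)| ≤ 1 / 4 := by
    have h := (tendsto_const_div_atTop_nhds_zero_nat (β / p)).eventually
      (Icc_mem_nhds (by norm_num : -(1 / 4 : ℝ) < 0) (by norm_num : (0 : ℝ) < 1 / 4))
    filter_upwards [h] with N hN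
    rwa [abs_le, div_div, mul_comm p] at *
  filter_upwards [hsmall, eventually_gt_atTop 0] with N hx hN σ τ
  rw [log_integral_exp_hamil_mul_exp_hamil hp0.le hp1,
    sum_apply_half_spin_products_mul _ (bernoulliCgf_zero p)]
  exact abs_sub_le_of_odd_even (by exact_mod_cast hN) hp0 rfl (by positivity) (sq_nonneg _)
    (magPair_sq_le σ τ) (abs_bernoulliCgf_sub_neg_sub_le hp0.le hp1 hx)
    (abs_bernoulliCgf_add_neg_sub_le hp0.le hp1 (hx.trans (by norm_num)))

/-- **Remark 6.** For fixed `β > 0` and constant `p ∈ (0,1]`,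
`log 𝔼[e^{-βH(σ)}e^{-βH(τ)}] = (1-p)β²/(4p) + β(|σ|²+|τ|²)/(2N) + (β²|στ|²/(4N²))(1/p - 1)
  + O(1/N²)((|σ|²+|τ|²)/N + 1)`, uniformly in `σ, τ`. -/
theorem log_expectation_exp_H_pair_const_p (β p : ℝ) (hβ : 0 < β)
    (hp : p ∈ Set.Ioc (0 : ℝ) 1) :
    ∃ C : ℝ, ∀ᶠ N : ℕ in atTop, ∀ σ τ : Fin N → Bool,
      |Real.log (∫ ω, Real.exp (-β * hamil N p ω σ) *
            Real.exp (-β * hamil N p ω τ) ∂(bern N p))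
          - (1 - p) * β ^ 2 / (4 * p)
          - β * ((mag σ) ^ 2 + (mag τ) ^ 2) / (2 * N)
          - β ^ 2 * (magPair σ τ) ^ 2 / (4 * (N : ℝ) ^ 2) * (1 / p - 1)|
        ≤ C / (N : ℝ) ^ 2 * (((mag σ) ^ 2 + (mag τ) ^ 2) / N + 1) :=
  log_expectation_exp_H_pair_const_p_general β p hp
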